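/- arXiv:2305.03939 — 2 statements merged into one kernel-verified Lean document; each statement's English description precedes it below -/
import Mathlib

section
/- (Theorem 1, expansion form) Assume in addition that the family of equivalence classes of the product functions (Φ_i)_{i ∈ ℕ^N} is a Hilbert basis (complete orthonormal system) of L²(μ). Let T ⊆ {1, …, N} be nonempty and let u : ℝ^N → ℝ be an ANOVA component function for T, i.e. u is Borel measurable, square-integrable with respect to μ, depends only on the coordinates in T (u(ξ) = u(ξ') whenever ξ_t = ξ'_t for all t ∈ T), and has zero partial mean in every coordinate t ∈ T (for μ-a.e. ξ, ∫_ℝ u(ξ_1, …, ξ_{t-1}, s, ξ_{t+1}, …, ξ_N) dμ_t(s) = 0). Then, with u_i = ∫_{ℝ^N} u(ξ) Φ_i(ξ) dμ(ξ), the expansion u = Σ_{i ∈ M_T} u_i Φ_i holds with convergence in L²(μ). -/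
/-!
The `Φ_i` form a Hilbert basis, so `u = ∑ᵢ ⟪Φ_i, u⟫ Φ_i` over all of `ℕ^N` and it suffices to show
that `⟪Φ_i, u⟫ = 0` for `i ∉ M_T`. Such an `i` has a coordinate `t` with either `t ∈ T`, `i_t = 0`
or `t ∉ T`, `i_t ≠ 0`. In both cases one factor of `u * Φ_i` does not depend on `ξ_t` and the
other has zero partial mean in `ξ_t`, so integrating out `ξ_t` first (Fubini) gives `0`: in the
first case by the ANOVA condition on `u`, in the second because `∫ φ_{i_t}^{(t)} dμ_t` is the
inner product of `φ_{i_t}^{(t)}` with `φ_0^{(t)} = 1`.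
-/

open MeasureTheory

theorem Finset.prod_apply_update {ι : Type*} [Fintype ι] [DecidableEq ι] {α : ι → Type*}
    {M : Type*} [CommMonoid M] (F : ∀ k, α k → M) (ξ : ∀ k, α k) (t : ι) (s : α t) :
    ∏ k, F k (Function.update ξ t s k) = F t s * ∏ k ∈ univ.erase t, F k (ξ k) := by
  simp_rw [Function.apply_update F, prod_update_of_mem (mem_univ t), sdiff_singleton_eq_erase]

theorem Finset.prod_apply_update_of_eq_one {ι : Type*} [Fintype ι] [DecidableEq ι]
    {α : ι → Type*} {M : Type*} [CommMonoid M] {F : ∀ k, α k → M} {t : ι} (hF : ∀ s, F t s = 1)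
    (ξ : ∀ k, α k) (s : α t) :
    ∏ k, F k (Function.update ξ t s k) = ∏ k, F k (ξ k) := by
  rw [prod_apply_update, ← mul_prod_erase _ _ (mem_univ t), hF, hF]

namespace MeasureTheory

section

variable {ι : Type*} [Fintype ι] [DecidableEq ι] {α : ι → Type*} [∀ k, MeasurableSpace (α k)]
  (μ : ∀ k, Measure (α k)) [∀ k, SigmaFinite (μ k)]

theorem measurePreserving_update (t : ι) [IsProbabilityMeasure (μ t)] :
    MeasurePreserving (fun p : (∀ k, α k) × α t => Function.update p.1 t p.2)
      ((Measure.pi μ).prod (μ t)) (Measure.pi μ) := by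
  refine ⟨measurable_update', (Measure.pi_eq fun s hs => ?_).symm⟩
  have hpre : (fun p : (∀ k, α k) × α t => Function.update p.1 t p.2) ⁻¹' Set.univ.pi s
      = Set.univ.pi (Function.update s t Set.univ) ×ˢ s t := by
    ext ⟨ξ, a⟩
    simp only [Set.mem_preimage, Set.mem_prod, Set.mem_univ_pi]
    grind
  rw [Measure.map_apply measurable_update' (.univ_pi hs), hpre, Measure.prod_prod,
    Measure.pi_pi, ← Finset.prod_erase_mul _ _ (Finset.mem_univ t), Function.update_self,
    measure_univ, mul_one, ← Finset.prod_erase_mul _ _ (Finset.mem_univ t)]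
  congr 1
  exact Finset.prod_congr rfl fun k hk => by rw [Function.update_of_ne (Finset.ne_of_mem_erase hk)]

theorem integral_eq_integral_integral_update (t : ι) [IsProbabilityMeasure (μ t)]
    {E : Type*} [NormedAddCommGroup E] [NormedSpace ℝ E] {f : (∀ k, α k) → E}
    (hf : Integrable f (Measure.pi μ)) :
    ∫ ξ, f ξ ∂Measure.pi μ = ∫ ξ, ∫ s, f (Function.update ξ t s) ∂μ t ∂Measure.pi μ := by
  have h := measurePreserving_update μ t
  conv_lhs => rw [← h.map_eq]
  rw [integral_map h.measurable.aemeasurable (by rw [h.map_eq]; exact hf.aestronglyMeasurable)]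
  exact integral_prod _ (h.integrable_comp_of_integrable hf)

theorem integral_mul_eq_zero_of_integral_update_eq_zero_left (t : ι)
    [IsProbabilityMeasure (μ t)] {f g : (∀ k, α k) → ℝ}
    (hfg : Integrable (fun ξ => f ξ * g ξ) (Measure.pi μ))
    (hf : ∀ᵐ ξ ∂Measure.pi μ, ∫ s, f (Function.update ξ t s) ∂μ t = 0)
    (hg : ∀ ξ s, g (Function.update ξ t s) = g ξ) :
    ∫ ξ, f ξ * g ξ ∂Measure.pi μ = 0 := by
  rw [integral_eq_integral_integral_update μ t hfg]
  refine integral_eq_zero_of_ae ?_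
  filter_upwards [hf] with ξ hξ
  simp_rw [hg, integral_mul_const, hξ, zero_mul, Pi.zero_apply]

theorem integral_mul_eq_zero_of_integral_update_eq_zero_right (t : ι)
    [IsProbabilityMeasure (μ t)] {f g : (∀ k, α k) → ℝ}
    (hfg : Integrable (fun ξ => f ξ * g ξ) (Measure.pi μ))
    (hf : ∀ ξ s, f (Function.update ξ t s) = f ξ)
    (hg : ∀ᵐ ξ ∂Measure.pi μ, ∫ s, g (Function.update ξ t s) ∂μ t = 0) :
    ∫ ξ, f ξ * g ξ ∂Measure.pi μ = 0 := by
  simp_rw [mul_comm (f _)] at hfg ⊢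
  exact integral_mul_eq_zero_of_integral_update_eq_zero_left μ t hfg hg hf

end

theorem integral_prod_apply_update_eq_zero {ι : Type*} [Fintype ι] [DecidableEq ι]
    {α : ι → Type*} [∀ k, MeasurableSpace (α k)] {μ : ∀ k, Measure (α k)} {F : ∀ k, α k → ℝ}
    {t : ι} (hF : ∫ s, F t s ∂μ t = 0) (ξ : ∀ k, α k) :
    ∫ s, ∏ k, F k (Function.update ξ t s k) ∂μ t = 0 := by
  simp_rw [Finset.prod_apply_update, integral_mul_const, hF, zero_mul]

theorem MemLp.inner_toLp_toLp {α : Type*} [MeasurableSpace α] {μ : Measure α} {f g : α → ℝ}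
    (hf : MemLp f 2 μ) (hg : MemLp g 2 μ) :
    inner ℝ (hf.toLp f) (hg.toLp g) = ∫ x, f x * g x ∂μ := by
  rw [L2.inner_def]
  refine integral_congr_ae ?_
  filter_upwards [hf.coeFn_toLp, hg.coeFn_toLp] with x hfx hgx
  simp [hfx, hgx, mul_comm]

end MeasureTheory

theorem HilbertBasis.hasSum_subtype_of_repr_eq_zero {ι 𝕜 E : Type*} [RCLike 𝕜]
    [NormedAddCommGroup E] [InnerProductSpace 𝕜 E] (b : HilbertBasis ι 𝕜 E) (x : E) {s : Set ι}
    (hs : ∀ i ∉ s, b.repr x i = 0) : HasSum (fun i : s => b.repr x i • b i) x := by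
  refine (hasSum_subtype_iff_of_support_subset fun i hi => ?_).mpr (b.hasSum_repr x)
  by_contra his
  exact hi (by simp [hs i his])

theorem anova_component_gPC_expansion_general
    (N : ℕ) (μk : Fin N → Measure ℝ) [∀ k, IsProbabilityMeasure (μk k)]
    (φ : Fin N → ℕ → ℝ → ℝ)
    (horth : ∀ k m n, ∫ x, φ k m x * φ k n x ∂(μk k) = if m = n then 1 else 0)
    (hone : ∀ k, φ k 0 = fun _ => 1)
    (hΦ2 : ∀ i : Fin N → ℕ,
      MemLp (fun ξ : Fin N → ℝ => ∏ k, φ k (i k) (ξ k)) 2 (Measure.pi μk))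
    -- the equivalence classes of the `Φ_i` form a complete orthonormal system of `L²(μ)`:
    (horthΦ : Orthonormal ℝ fun i : Fin N → ℕ =>
      (hΦ2 i).toLp (fun ξ : Fin N → ℝ => ∏ k, φ k (i k) (ξ k)))
    (hcomplete : (Submodule.span ℝ (Set.range fun i : Fin N → ℕ =>
      (hΦ2 i).toLp (fun ξ : Fin N → ℝ => ∏ k, φ k (i k) (ξ k)))).topologicalClosure = ⊤)
    (T : Set (Fin N))
    (u : (Fin N → ℝ) → ℝ)
    (hu2 : MemLp u 2 (Measure.pi μk))
    (hdep : ∀ ξ ξ' : Fin N → ℝ, (∀ t ∈ T, ξ t = ξ' t) → u ξ = u ξ')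
    (hzero : ∀ t ∈ T, ∀ᵐ ξ ∂(Measure.pi μk),
      ∫ s, u (Function.update ξ t s) ∂(μk t) = 0) :
    HasSum
      (fun i : {i : Fin N → ℕ // (∀ t ∈ T, i t ≠ 0) ∧ ∀ t ∉ T, i t = 0} =>
        (∫ ξ : Fin N → ℝ, u ξ * ∏ k, φ k (i.1 k) (ξ k) ∂(Measure.pi μk)) •
          (hΦ2 i.1).toLp (fun ξ : Fin N → ℝ => ∏ k, φ k (i.1 k) (ξ k)))
      (hu2.toLp u) := by
  have hint (i : Fin N → ℕ) :
      Integrable (fun ξ => u ξ * ∏ k, φ k (i k) (ξ k)) (Measure.pi μk) :=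
    hu2.integrable_mul (hΦ2 i)
  have hvanish : ∀ i : Fin N → ℕ, ¬((∀ t ∈ T, i t ≠ 0) ∧ ∀ t ∉ T, i t = 0) →
      ∫ ξ, u ξ * ∏ k, φ k (i k) (ξ k) ∂(Measure.pi μk) = 0 := by
    intro i hi
    simp only [not_and_or, not_forall, not_not, exists_prop] at hi
    rcases hi with ⟨t, htT, hit⟩ | ⟨t, htT, hit⟩
    · refine integral_mul_eq_zero_of_integral_update_eq_zero_left _ t (hint i) (hzero t htT)
        (Finset.prod_apply_update_of_eq_one fun s => ?_)
      simp [hit, hone]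
    · have hmean : ∫ s, φ t (i t) s ∂(μk t) = 0 := by
        simpa [hone, hit] using horth t (i t) 0
      exact integral_mul_eq_zero_of_integral_update_eq_zero_right _ t (hint i)
        (fun ξ s => hdep _ _ fun r hr => Function.update_of_ne (ne_of_mem_of_not_mem hr htT) _ _)
        (ae_of_all _ (integral_prod_apply_update_eq_zero hmean))
  let b := HilbertBasis.mk horthΦ hcomplete.ge
  have hb : ⇑b = fun i => (hΦ2 i).toLp (fun ξ => ∏ k, φ k (i k) (ξ k)) :=
    HilbertBasis.coe_mk _ _
  have hcoef (i : Fin N → ℕ) :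
      b.repr (hu2.toLp u) i = ∫ ξ, u ξ * ∏ k, φ k (i k) (ξ k) ∂(Measure.pi μk) := by
    rw [b.repr_apply_apply, hb, real_inner_comm, hu2.inner_toLp_toLp]
  have h := b.hasSum_subtype_of_repr_eq_zero (hu2.toLp u) fun i hi =>
    (hcoef i).trans (hvanish i hi)
  simp only [hcoef, hb] at h
  exact h

/-- Theorem 1, expansion form: If the (equivalence classes of the)
product functions `Φ_i` form a Hilbert basis (complete orthonormal system) of
`L²(μ)`, and `u` is an ANOVA component function for a nonempty `T`, then
`u = Σ_{i ∈ M_T} u_i Φ_i` with `u_i = ∫ u Φ_i dμ`, convergence in `L²(μ)`. -/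
theorem anova_component_gPC_expansion
    (N : ℕ) (μk : Fin N → Measure ℝ) [∀ k, IsProbabilityMeasure (μk k)]
    (φ : Fin N → ℕ → ℝ → ℝ)
    (hmeas : ∀ k n, Measurable (φ k n))
    (horth : ∀ k m n, ∫ x, φ k m x * φ k n x ∂(μk k) = if m = n then 1 else 0)
    (hone : ∀ k, φ k 0 = fun _ => 1)
    (hΦ2 : ∀ i : Fin N → ℕ,
      MemLp (fun ξ : Fin N → ℝ => ∏ k, φ k (i k) (ξ k)) 2 (Measure.pi μk))
    -- the equivalence classes of the `Φ_i` form a complete orthonormal system of `L²(μ)`: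
    (horthΦ : Orthonormal ℝ fun i : Fin N → ℕ =>
      (hΦ2 i).toLp (fun ξ : Fin N → ℝ => ∏ k, φ k (i k) (ξ k)))
    (hcomplete : (Submodule.span ℝ (Set.range fun i : Fin N → ℕ =>
      (hΦ2 i).toLp (fun ξ : Fin N → ℝ => ∏ k, φ k (i k) (ξ k)))).topologicalClosure = ⊤)
    (T : Set (Fin N)) (hT : T.Nonempty)
    (u : (Fin N → ℝ) → ℝ) (humeas : Measurable u)
    (hu2 : MemLp u 2 (Measure.pi μk))
    (hdep : ∀ ξ ξ' : Fin N → ℝ, (∀ t ∈ T, ξ t = ξ' t) → u ξ = u ξ')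
    (hzero : ∀ t ∈ T, ∀ᵐ ξ ∂(Measure.pi μk),
      ∫ s, u (Function.update ξ t s) ∂(μk t) = 0) :
    HasSum
      (fun i : {i : Fin N → ℕ // (∀ t ∈ T, i t ≠ 0) ∧ ∀ t ∉ T, i t = 0} =>
        (∫ ξ : Fin N → ℝ, u ξ * ∏ k, φ k (i.1 k) (ξ k) ∂(Measure.pi μk)) •
          (hΦ2 i.1).toLp (fun ξ : Fin N → ℝ => ∏ k, φ k (i.1 k) (ξ k)))
      (hu2.toLp u) :=
  anova_component_gPC_expansion_general N μk φ horth hone hΦ2 horthΦ hcomplete T u hu2 hdep hzero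
end

section
/- (Variance additivity of the ANOVA decomposition) Let 𝒯 be a finite collection of distinct nonempty subsets of {1, …, N}, let c_0 ∈ ℝ, and for each T ∈ 𝒯 let u_T : ℝ^N → ℝ be Borel measurable, square-integrable with respect to μ, depending only on the coordinates in T (u_T(ξ) = u_T(ξ') whenever ξ_t = ξ'_t for all t ∈ T), and having zero partial mean in every coordinate t ∈ T (for μ-a.e. ξ, ∫_ℝ u_T(ξ_1, …, ξ_{t-1}, s, ξ_{t+1}, …, ξ_N) dμ_t(s) = 0). Define u(ξ) = c_0 + Σ_{T ∈ 𝒯} u_T(ξ). Then ∫_{ℝ^N} u dμ = c_0 and the variance of u is the sum of the variances of the component functions: ∫_{ℝ^N} u² dμ − (∫_{ℝ^N} u dμ)² = Σ_{T ∈ 𝒯} ∫_{ℝ^N} u_T² dμ. -/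
/-!
The map `(ξ, s) ↦ ξ[t ↦ s]` sends `μ ⊗ μ_t` to `μ`, so by Fubini a function whose partial mean
in the coordinate `t` vanishes has integral zero. Hence every `u_T` is centred. For `S ≠ T` pick
`t` in one of the sets but not in the other, say `t ∈ T \ S`: then `u_S` does not see `t`, so the
partial mean of `u_S u_T` in `t` is `u_S` times that of `u_T`, i.e. zero. The components are thus
orthogonal in `L²(μ)`, and `Var u = ∫ (∑ u_T)² = ∑ ∫ u_T²` by Pythagoras.
-/

open MeasureTheory ProbabilityTheory

lemma preimage_update_univ_pi {ι : Type*} [DecidableEq ι] {α : ι → Type*} (t : ι)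
    (s : ∀ i, Set (α i)) :
    (fun p : (∀ i, α i) × α t => Function.update p.1 t p.2) ⁻¹' Set.univ.pi s =
      Set.univ.pi (Function.update s t Set.univ) ×ˢ s t := by
  ext p
  simp only [Set.mem_preimage, Set.mem_univ_pi, Set.mem_prod]
  rw [Function.forall_update_iff (p := fun i x => x ∈ s i),
    Function.forall_update_iff (p := fun i x => p.1 i ∈ x)]
  simp [and_comm]

section

variable {ι : Type*} [Fintype ι] [DecidableEq ι] {α : ι → Type*} [∀ i, MeasurableSpace (α i)]
  {μ : ∀ i, Measure (α i)} [∀ i, SigmaFinite (μ i)] (t : ι) [IsProbabilityMeasure (μ t)]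

theorem measurePreserving_update_prod :
    MeasurePreserving (fun p : (∀ i, α i) × α t => Function.update p.1 t p.2)
      ((Measure.pi μ).prod (μ t)) (Measure.pi μ) := by
  refine ⟨measurable_update', (Measure.pi_eq fun s hs => ?_).symm⟩
  rw [Measure.map_apply measurable_update' (.univ_pi hs), preimage_update_univ_pi,
    Measure.prod_prod, Measure.pi_pi, ← Finset.mul_prod_erase _ _ (Finset.mem_univ t),
    ← Finset.mul_prod_erase _ _ (Finset.mem_univ t), Function.update_self, measure_univ, one_mul,
    mul_comm]
  congr 1
  exact Finset.prod_congr rfl fun i hi => by rw [Function.update_of_ne (Finset.ne_of_mem_erase hi)]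

variable {E : Type*} [NormedAddCommGroup E] [NormedSpace ℝ E]

theorem integral_eq_integral_integral_update {g : (∀ i, α i) → E}
    (hg : Integrable g (Measure.pi μ)) :
    ∫ ξ, g ξ ∂Measure.pi μ = ∫ ξ, ∫ s, g (Function.update ξ t s) ∂μ t ∂Measure.pi μ := by
  have hpres := measurePreserving_update_prod (μ := μ) t
  calc ∫ ξ, g ξ ∂Measure.pi μ
      = ∫ p, g (Function.update p.1 t p.2) ∂(Measure.pi μ).prod (μ t) := by
        rw [← integral_map hpres.aemeasurable (by rw [hpres.map_eq]; exact hg.1),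
          hpres.map_eq]
    _ = _ := integral_prod _ (hpres.integrable_comp_of_integrable hg)

theorem integral_eq_zero_of_ae_integral_update_eq_zero {g : (∀ i, α i) → E}
    (hg : Integrable g (Measure.pi μ))
    (hmean : ∀ᵐ ξ ∂Measure.pi μ, ∫ s, g (Function.update ξ t s) ∂μ t = 0) :
    ∫ ξ, g ξ ∂Measure.pi μ = 0 := by
  rw [integral_eq_integral_integral_update t hg, integral_congr_ae hmean, integral_zero]

theorem integral_mul_eq_zero_of_update_invariant {f g : (∀ i, α i) → ℝ}
    (hfg : Integrable (fun ξ => f ξ * g ξ) (Measure.pi μ))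
    (hf : ∀ ξ s, f (Function.update ξ t s) = f ξ)
    (hg : ∀ᵐ ξ ∂Measure.pi μ, ∫ s, g (Function.update ξ t s) ∂μ t = 0) :
    ∫ ξ, f ξ * g ξ ∂Measure.pi μ = 0 := by
  refine integral_eq_zero_of_ae_integral_update_eq_zero t hfg ?_
  filter_upwards [hg] with ξ hξ
  simp_rw [hf, integral_const_mul, hξ, mul_zero]

end

lemma DependsOn.update_of_notMem {ι β : Type*} [DecidableEq ι] {α : ι → Type*}
    {f : (∀ i, α i) → β} {s : Set ι} (hf : DependsOn f s) {t : ι} (ht : t ∉ s)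
    (ξ : ∀ i, α i) (a : α t) : f (Function.update ξ t a) = f ξ :=
  hf fun _ hi => Function.update_of_ne (ne_of_mem_of_not_mem hi ht) a ξ

theorem integral_sq_finsetSum_of_orthogonal {Ω ι : Type*} [MeasurableSpace Ω] {μ : Measure Ω}
    (s : Finset ι) {f : ι → Ω → ℝ} (hf : ∀ i ∈ s, MemLp (f i) 2 μ)
    (horth : ∀ i ∈ s, ∀ j ∈ s, i ≠ j → ∫ ω, f i ω * f j ω ∂μ = 0) :
    ∫ ω, (∑ i ∈ s, f i ω) ^ 2 ∂μ = ∑ i ∈ s, ∫ ω, f i ω ^ 2 ∂μ := by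
  have hprod : ∀ i ∈ s, ∀ j ∈ s, Integrable (fun ω => f i ω * f j ω) μ :=
    fun i hi j hj => (hf i hi).integrable_mul (hf j hj)
  simp_rw [sq, Finset.sum_mul_sum]
  rw [integral_finsetSum s fun i hi => integrable_finsetSum s (hprod i hi)]
  refine Finset.sum_congr rfl fun i hi => ?_
  rw [integral_finsetSum s (hprod i hi),
    Finset.sum_eq_single_of_mem i hi fun j hj hji => horth i hi j hj hji.symm]

section Anova

variable {ι : Type*} [Fintype ι] [DecidableEq ι] {α : ι → Type*} [∀ i, MeasurableSpace (α i)]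

structure IsAnovaComponent (μ : ∀ i, Measure (α i)) (T : Set ι) (f : (∀ i, α i) → ℝ) :
    Prop where
  memLp : MemLp f 2 (Measure.pi μ)
  dependsOn : DependsOn f T
  integral_update : ∀ t ∈ T, ∀ᵐ ξ ∂Measure.pi μ, ∫ s, f (Function.update ξ t s) ∂μ t = 0

namespace IsAnovaComponent

variable {μ : ∀ i, Measure (α i)} [∀ i, IsProbabilityMeasure (μ i)] {S T : Set ι}
  {f g : (∀ i, α i) → ℝ}

theorem integral_eq_zero (hf : IsAnovaComponent μ T f) (hT : T.Nonempty) :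
    ∫ ξ, f ξ ∂Measure.pi μ = 0 :=
  integral_eq_zero_of_ae_integral_update_eq_zero hT.some (hf.memLp.integrable one_le_two)
    (hf.integral_update _ hT.some_mem)

theorem integral_mul_eq_zero (hf : IsAnovaComponent μ S f) (hg : IsAnovaComponent μ T g)
    (hST : S ≠ T) : ∫ ξ, f ξ * g ξ ∂Measure.pi μ = 0 := by
  wlog hTS : ∃ t ∈ T, t ∉ S generalizing S T f g
  · obtain ⟨t, htS, htT⟩ : ∃ t ∈ S, t ∉ T := by
      by_contra! hST'
      push Not at hTS
      exact hST (Set.Subset.antisymm hST' hTS)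
    simpa only [mul_comm] using this hg hf hST.symm ⟨t, htS, htT⟩
  obtain ⟨t, htT, htS⟩ := hTS
  exact integral_mul_eq_zero_of_update_invariant t (hf.memLp.integrable_mul hg.memLp)
    (hf.dependsOn.update_of_notMem htS) (hg.integral_update t htT)

end IsAnovaComponent

end Anova

theorem anova_variance_additivity_general
    (N : ℕ) (μk : Fin N → Measure ℝ) [∀ k, IsProbabilityMeasure (μk k)]
    (𝒯 : Finset (Finset (Fin N))) (h𝒯 : ∀ T ∈ 𝒯, T.Nonempty)
    (c₀ : ℝ)
    (uT : Finset (Fin N) → (Fin N → ℝ) → ℝ)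
    (h2 : ∀ T ∈ 𝒯, MemLp (uT T) 2 (Measure.pi μk))
    (hdep : ∀ T ∈ 𝒯, ∀ ξ ξ' : Fin N → ℝ,
      (∀ t ∈ T, ξ t = ξ' t) → uT T ξ = uT T ξ')
    (hzero : ∀ T ∈ 𝒯, ∀ t ∈ T, ∀ᵐ ξ ∂(Measure.pi μk),
      ∫ s, uT T (Function.update ξ t s) ∂(μk t) = 0)
    (u : (Fin N → ℝ) → ℝ)
    (hu : ∀ ξ : Fin N → ℝ, u ξ = c₀ + ∑ T ∈ 𝒯, uT T ξ) :
    ∫ ξ : Fin N → ℝ, u ξ ∂(Measure.pi μk) = c₀ ∧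
      (∫ ξ : Fin N → ℝ, (u ξ) ^ 2 ∂(Measure.pi μk)) -
          (∫ ξ : Fin N → ℝ, u ξ ∂(Measure.pi μk)) ^ 2 =
        ∑ T ∈ 𝒯, ∫ ξ : Fin N → ℝ, (uT T ξ) ^ 2 ∂(Measure.pi μk) := by
  have hcomp : ∀ T ∈ 𝒯, IsAnovaComponent μk (T : Set (Fin N)) (uT T) :=
    fun T hT => ⟨h2 T hT, fun _ _ => hdep T hT _ _, hzero T hT⟩
  have hint : ∀ T ∈ 𝒯, Integrable (uT T) (Measure.pi μk) :=
    fun T hT => (h2 T hT).integrable one_le_two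
  have hu2 : MemLp u 2 (Measure.pi μk) := by
    rw [funext hu]; exact (memLp_const c₀).add (memLp_finsetSum 𝒯 h2)
  have hmean : ∫ ξ, u ξ ∂Measure.pi μk = c₀ := by
    simp_rw [hu]
    rw [integral_add (integrable_const c₀) (integrable_finsetSum 𝒯 hint),
      integral_finsetSum 𝒯 hint, Finset.sum_eq_zero fun T hT =>
        (hcomp T hT).integral_eq_zero (by exact_mod_cast h𝒯 T hT)]
    simp
  refine ⟨hmean, (variance_eq_sub hu2).symm.trans ?_⟩
  rw [variance_eq_integral hu2.aemeasurable, hmean]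
  simp_rw [hu, add_sub_cancel_left]
  exact integral_sq_finsetSum_of_orthogonal 𝒯 h2 fun S hS T hT hST =>
    (hcomp S hS).integral_mul_eq_zero (hcomp T hT) (by exact_mod_cast hST)

/-- Variance additivity of the ANOVA decomposition: If
`u = c₀ + Σ_{T ∈ 𝒯} u_T` where each `u_T` is an ANOVA component function for the
nonempty set `T`, then `∫ u dμ = c₀` and
`Var(u) = ∫ u² dμ − (∫ u dμ)² = Σ_{T ∈ 𝒯} ∫ u_T² dμ`. -/
theorem anova_variance_additivity
    (N : ℕ) (μk : Fin N → Measure ℝ) [∀ k, IsProbabilityMeasure (μk k)]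
    (𝒯 : Finset (Finset (Fin N))) (h𝒯 : ∀ T ∈ 𝒯, T.Nonempty)
    (c₀ : ℝ)
    (uT : Finset (Fin N) → (Fin N → ℝ) → ℝ)
    (hmeas : ∀ T ∈ 𝒯, Measurable (uT T))
    (h2 : ∀ T ∈ 𝒯, MemLp (uT T) 2 (Measure.pi μk))
    (hdep : ∀ T ∈ 𝒯, ∀ ξ ξ' : Fin N → ℝ,
      (∀ t ∈ T, ξ t = ξ' t) → uT T ξ = uT T ξ')
    (hzero : ∀ T ∈ 𝒯, ∀ t ∈ T, ∀ᵐ ξ ∂(Measure.pi μk),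
      ∫ s, uT T (Function.update ξ t s) ∂(μk t) = 0)
    (u : (Fin N → ℝ) → ℝ)
    (hu : ∀ ξ : Fin N → ℝ, u ξ = c₀ + ∑ T ∈ 𝒯, uT T ξ) :
    ∫ ξ : Fin N → ℝ, u ξ ∂(Measure.pi μk) = c₀ ∧
      (∫ ξ : Fin N → ℝ, (u ξ) ^ 2 ∂(Measure.pi μk)) -
          (∫ ξ : Fin N → ℝ, u ξ ∂(Measure.pi μk)) ^ 2 =
        ∑ T ∈ 𝒯, ∫ ξ : Fin N → ℝ, (uT T ξ) ^ 2 ∂(Measure.pi μk) :=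
  anova_variance_additivity_general N μk 𝒯 h𝒯 c₀ uT h2 hdep hzero u hu
end
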